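/- arXiv:1411.0213 — 7 statements merged into one kernel-verified Lean document; each statement's English description precedes it below -/
import Mathlib

section
/- Let b > 0 and a > 0, and define F(x) = Γ(x)Γ(x+b−a) / (Γ(x−a)Γ(x+b)) for real x > a. Then F is strictly monotone increasing on (a, +∞). -/
open Real Filter Finset

/-- The single factor in the Euler-product expression of the Gamma ratio. -/
private noncomputable def stmt3Factor (a b t j : ℝ) : ℝ :=
  (t - a + j) * (t + b + j) / ((t + j) * (t + b - a + j))

private lemma stmt3Factor_eq (a b t j : ℝ) (ha : 0 < a) (hb : 0 < b) (ht : a < t)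
    (hj : 0 ≤ j) :
    stmt3Factor a b t j = 1 - a * b / ((t + j) * (t + b - a + j)) := by
  have h1 : (0:ℝ) < t + j := by linarith
  have h2 : (0:ℝ) < t + b - a + j := by linarith
  rw [stmt3Factor]
  field_simp
  ring

private lemma stmt3Factor_lt (a b : ℝ) (ha : 0 < a) (hb : 0 < b) {x y j : ℝ}
    (hx : a < x) (hxy : x < y) (hj : 0 ≤ j) :
    stmt3Factor a b x j < stmt3Factor a b y j := by
  have hy : a < y := hx.trans hxy
  rw [stmt3Factor_eq a b x j ha hb hx hj, stmt3Factor_eq a b y j ha hb hy hj]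
  have h1 : (0:ℝ) < (x + j) * (x + b - a + j) := by
    apply mul_pos <;> linarith
  have h2 : (x + j) * (x + b - a + j) < (y + j) * (y + b - a + j) := by
    apply mul_lt_mul'' <;> linarith
  have := div_lt_div_of_pos_left (mul_pos ha hb) h1 h2
  linarith

private lemma stmt3Factor_pos (a b : ℝ) (ha : 0 < a) (hb : 0 < b) {x j : ℝ}
    (hx : a < x) (hj : 0 ≤ j) : 0 < stmt3Factor a b x j := by
  apply div_pos <;> apply mul_pos <;> linarith

/-- Key algebraic identity: ratio of GammaSeqs is a finite product of factors. -/
private lemma stmt3_gammaSeq_ratio (a b x : ℝ) (ha : 0 < a) (hb : 0 < b) (hx : a < x)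
    {n : ℕ} (hn : n ≠ 0) :
    Real.GammaSeq x n * Real.GammaSeq (x + b - a) n /
      (Real.GammaSeq (x - a) n * Real.GammaSeq (x + b) n) =
    ∏ j ∈ Finset.range (n + 1), stmt3Factor a b x (j : ℝ) := by
  have hN : (0:ℝ) < (n : ℝ) := by positivity
  have hpos : ∀ s : ℝ, 0 < s → (0:ℝ) < ∏ j ∈ Finset.range (n + 1), (s + (j:ℝ)) := by
    intro s hs
    apply Finset.prod_pos
    intro j _
    positivity
  have hxa : (0:ℝ) < x - a := by linarith
  have hx0 : (0:ℝ) < x := by linarith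
  have hxb : (0:ℝ) < x + b := by linarith
  have hxba : (0:ℝ) < x + b - a := by linarith
  have P1 := hpos _ hx0
  have P2 := hpos _ hxba
  have P3 := hpos _ hxa
  have P4 := hpos _ hxb
  have hc : (n:ℝ) ^ x * (n:ℝ) ^ (x + b - a) = (n:ℝ) ^ (x - a) * (n:ℝ) ^ (x + b) := by
    rw [← Real.rpow_add hN, ← Real.rpow_add hN]
    ring_nf
  have hprod : ∏ j ∈ Finset.range (n + 1), stmt3Factor a b x (j : ℝ) =
      ((∏ j ∈ Finset.range (n + 1), (x - a + (j:ℝ))) *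
        ∏ j ∈ Finset.range (n + 1), (x + b + (j:ℝ))) /
      ((∏ j ∈ Finset.range (n + 1), (x + (j:ℝ))) *
        ∏ j ∈ Finset.range (n + 1), (x + b - a + (j:ℝ))) := by
    rw [← Finset.prod_mul_distrib, ← Finset.prod_mul_distrib, ← Finset.prod_div_distrib]
    rfl
  rw [hprod]
  have e : Real.GammaSeq x n * Real.GammaSeq (x + b - a) n /
      (Real.GammaSeq (x - a) n * Real.GammaSeq (x + b) n) =
      ((n:ℝ) ^ x * (n:ℝ) ^ (x + b - a) / ((n:ℝ) ^ (x - a) * (n:ℝ) ^ (x + b))) *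
      (((∏ j ∈ Finset.range (n + 1), (x - a + (j:ℝ))) *
        ∏ j ∈ Finset.range (n + 1), (x + b + (j:ℝ))) /
      ((∏ j ∈ Finset.range (n + 1), (x + (j:ℝ))) *
        ∏ j ∈ Finset.range (n + 1), (x + b - a + (j:ℝ)))) := by
    simp only [Real.GammaSeq]
    have hf : (0:ℝ) < (n.factorial : ℝ) := by positivity
    have e1 : ((n:ℝ)) ^ x ≠ 0 := (Real.rpow_pos_of_pos hN _).ne'
    have e2 : ((n:ℝ)) ^ (x + b - a) ≠ 0 := (Real.rpow_pos_of_pos hN _).ne'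
    have e3 : ((n:ℝ)) ^ (x - a) ≠ 0 := (Real.rpow_pos_of_pos hN _).ne'
    have e4 : ((n:ℝ)) ^ (x + b) ≠ 0 := (Real.rpow_pos_of_pos hN _).ne'
    field_simp
  rw [e, hc, div_self (by positivity), one_mul]

/-- Let `b > 0` and `a > 0`, and `F x = Γ(x)Γ(x+b−a)/(Γ(x−a)Γ(x+b))`.
Then `F` is strictly monotone increasing on `(a, ∞)`. -/
theorem stmt3 (a b : ℝ) (ha : 0 < a) (hb : 0 < b) :
    StrictMonoOn (fun x : ℝ =>
      Real.Gamma x * Real.Gamma (x + b - a) / (Real.Gamma (x - a) * Real.Gamma (x + b)))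
      (Set.Ioi a) := by
  intro x hx y hy hxy
  simp only [Set.mem_Ioi] at hx hy
  set F : ℝ → ℝ := fun x =>
    Real.Gamma x * Real.Gamma (x + b - a) / (Real.Gamma (x - a) * Real.Gamma (x + b)) with hF
  have hGpos : ∀ t : ℝ, a < t →
      0 < Real.Gamma (t - a) * Real.Gamma (t + b) := fun t ht =>
    mul_pos (Real.Gamma_pos_of_pos (by linarith)) (Real.Gamma_pos_of_pos (by linarith))
  have hFpos : ∀ t : ℝ, a < t → 0 < F t := by
    intro t ht
    apply div_pos _ (hGpos t ht)
    exact mul_pos (Real.Gamma_pos_of_pos (by linarith)) (Real.Gamma_pos_of_pos (by linarith))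
  -- Limit of GammaSeq ratios
  have hlim : ∀ t : ℝ, a < t → Filter.Tendsto (fun n =>
      Real.GammaSeq t n * Real.GammaSeq (t + b - a) n /
        (Real.GammaSeq (t - a) n * Real.GammaSeq (t + b) n)) Filter.atTop (nhds (F t)) := by
    intro t ht
    exact ((Real.GammaSeq_tendsto_Gamma t).mul
      (Real.GammaSeq_tendsto_Gamma (t + b - a))).div
      ((Real.GammaSeq_tendsto_Gamma (t - a)).mul
        (Real.GammaSeq_tendsto_Gamma (t + b))) (hGpos t ht).ne'
  have hy' : a < y := hy
  have hr0x : 0 < stmt3Factor a b x 0 := stmt3Factor_pos a b ha hb hx le_rfl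
  have hr0y : 0 < stmt3Factor a b y 0 := stmt3Factor_pos a b ha hb hy' le_rfl
  have hr0 : stmt3Factor a b x 0 < stmt3Factor a b y 0 :=
    stmt3Factor_lt a b ha hb hx hxy le_rfl
  -- key inequality in the limit
  have key : F x * stmt3Factor a b y 0 ≤ F y * stmt3Factor a b x 0 := by
    refine le_of_tendsto_of_tendsto ((hlim x hx).mul_const _) ((hlim y hy').mul_const _) ?_
    filter_upwards [Filter.eventually_gt_atTop 0] with n hn
    rw [stmt3_gammaSeq_ratio a b x ha hb hx hn.ne',
      stmt3_gammaSeq_ratio a b y ha hb hy' hn.ne']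
    rw [Finset.prod_range_succ', Finset.prod_range_succ']
    push_cast
    have hprodle : (∏ i ∈ Finset.range n, stmt3Factor a b x ((i:ℝ) + 1)) ≤
        ∏ i ∈ Finset.range n, stmt3Factor a b y ((i:ℝ) + 1) := by
      apply Finset.prod_le_prod
      · intro i _
        exact (stmt3Factor_pos a b ha hb hx (by positivity)).le
      · intro i _
        exact (stmt3Factor_lt a b ha hb hx hxy (by positivity)).le
    have hc : 0 ≤ stmt3Factor a b y 0 * stmt3Factor a b x 0 := by positivity
    have h := mul_le_mul_of_nonneg_right hprodle hc
    calc (∏ i ∈ Finset.range n, stmt3Factor a b x ((i:ℝ) + 1)) * stmt3Factor a b x 0 *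
          stmt3Factor a b y 0
        = (∏ i ∈ Finset.range n, stmt3Factor a b x ((i:ℝ) + 1)) *
          (stmt3Factor a b y 0 * stmt3Factor a b x 0) := by ring
      _ ≤ (∏ i ∈ Finset.range n, stmt3Factor a b y ((i:ℝ) + 1)) *
          (stmt3Factor a b y 0 * stmt3Factor a b x 0) := h
      _ = (∏ i ∈ Finset.range n, stmt3Factor a b y ((i:ℝ) + 1)) * stmt3Factor a b y 0 *
          stmt3Factor a b x 0 := by ring
  have : F x * stmt3Factor a b y 0 < F y * stmt3Factor a b y 0 := by
    calc F x * stmt3Factor a b y 0 ≤ F y * stmt3Factor a b x 0 := key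
      _ < F y * stmt3Factor a b y 0 := by
          exact mul_lt_mul_of_pos_left hr0 (hFpos y hy')
  exact lt_of_mul_lt_mul_right this hr0y.le
end

section
/- Let b > 0 and a < 0, and define F(x) = Γ(x)Γ(x+b−a) / (Γ(x−a)Γ(x+b)) for real x > 0. Then F is strictly monotone decreasing on (0, +∞). -/
open Filter Finset Topology

/-- Let `b > 0` and `a < 0`, and `F x = Γ(x)Γ(x+b−a)/(Γ(x−a)Γ(x+b))`.
Then `F` is strictly monotone decreasing on `(0, ∞)`. -/
theorem stmt4 (a b : ℝ) (ha : a < 0) (hb : 0 < b) :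
    StrictAntiOn (fun x : ℝ =>
      Real.Gamma x * Real.Gamma (x + b - a) / (Real.Gamma (x - a) * Real.Gamma (x + b)))
      (Set.Ioi 0) := by
  set c : ℝ := -a with hc
  have hc0 : 0 < c := by simp [hc]; linarith
  -- the basic factor
  set gg : ℝ → ℝ := fun u => (u + c) * (u + b) / (u * (u + b + c)) with hgg
  have gg_pos : ∀ u : ℝ, 0 < u → 0 < gg u := by
    intro u hu; apply div_pos <;> positivity
  have gg_anti : ∀ u v : ℝ, 0 < u → u ≤ v → gg v ≤ gg u := by
    intro u v hu huv
    have hv : 0 < v := lt_of_lt_of_le hu huv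
    rw [hgg]; dsimp only
    rw [div_le_div_iff₀ (by positivity) (by positivity)]
    nlinarith [mul_pos hb hc0, mul_nonneg (sub_nonneg.2 huv) (mul_pos hb hc0).le]
  have gg_anti' : ∀ u v : ℝ, 0 < u → u < v → gg v < gg u := by
    intro u v hu huv
    have hv : 0 < v := hu.trans huv
    rw [hgg]; dsimp only
    rw [div_lt_div_iff₀ (by positivity) (by positivity)]
    nlinarith [mul_pos hb hc0, mul_pos (sub_pos.2 huv) (mul_pos hb hc0)]
  -- product identity for GammaSeq quotient
  have key : ∀ t : ℝ, 0 < t → ∀ n : ℕ, 1 ≤ n →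
      Real.GammaSeq t n * Real.GammaSeq (t + b + c) n /
        (Real.GammaSeq (t + c) n * Real.GammaSeq (t + b) n) =
      ∏ j ∈ range (n + 1), gg (t + j) := by
    intro t ht n hn
    have hn0 : (0:ℝ) < n := by exact_mod_cast hn
    have hprod : ∀ s : ℝ, 0 < s → (0:ℝ) < ∏ j ∈ range (n + 1), (s + j) := by
      intro s hs
      apply Finset.prod_pos
      intro j _; positivity
    have h1 := hprod t ht
    have h2 := hprod (t + c) (by linarith)
    have h3 := hprod (t + b) (by linarith)
    have h4 := hprod (t + b + c) (by linarith)
    have hrpow : (n:ℝ) ^ t * (n:ℝ) ^ (t + b + c) = (n:ℝ) ^ (t + c) * (n:ℝ) ^ (t + b) := by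
      rw [← Real.rpow_add hn0, ← Real.rpow_add hn0]; ring_nf
    have hfact : (0:ℝ) < (n.factorial : ℝ) := by positivity
    rw [hgg]
    simp only [Real.GammaSeq]
    rw [show (∏ j ∈ range (n + 1), (t + ↑j + c) * (t + ↑j + b) / ((t + ↑j) * (t + ↑j + b + c)))
        = (∏ j ∈ range (n + 1), (t + ↑j + c) * (t + ↑j + b)) /
          ∏ j ∈ range (n + 1), ((t + ↑j) * (t + ↑j + b + c)) from Finset.prod_div_distrib _ _,
      Finset.prod_mul_distrib, Finset.prod_mul_distrib]
    have e2 : ∏ j ∈ range (n + 1), (t + ↑j + c) = ∏ j ∈ range (n + 1), (t + c + ↑j) := by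
      apply Finset.prod_congr rfl; intro j _; ring
    have e3 : ∏ j ∈ range (n + 1), (t + ↑j + b) = ∏ j ∈ range (n + 1), (t + b + ↑j) := by
      apply Finset.prod_congr rfl; intro j _; ring
    have e4 : ∏ j ∈ range (n + 1), (t + ↑j + b + c) = ∏ j ∈ range (n + 1), (t + b + c + ↑j) := by
      apply Finset.prod_congr rfl; intro j _; ring
    rw [e2, e3, e4]
    have hp1 : (0:ℝ) < (n:ℝ) ^ t := Real.rpow_pos_of_pos hn0 _
    have hp2 : (0:ℝ) < (n:ℝ) ^ (t + c) := Real.rpow_pos_of_pos hn0 _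
    have hp3 : (0:ℝ) < (n:ℝ) ^ (t + b) := Real.rpow_pos_of_pos hn0 _
    have hp4 : (0:ℝ) < (n:ℝ) ^ (t + b + c) := Real.rpow_pos_of_pos hn0 _
    field_simp
    linear_combination hrpow
  have gamma_pos : ∀ t : ℝ, 0 < t →
      0 < Real.Gamma t * Real.Gamma (t + b + c) / (Real.Gamma (t + c) * Real.Gamma (t + b)) := by
    intro t ht
    have := Real.Gamma_pos_of_pos ht
    have := Real.Gamma_pos_of_pos (show 0 < t + b + c by linarith)
    have := Real.Gamma_pos_of_pos (show 0 < t + c by linarith)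
    have := Real.Gamma_pos_of_pos (show 0 < t + b by linarith)
    positivity
  have hF : ∀ t : ℝ, 0 < t → Tendsto (fun n => Real.GammaSeq t n * Real.GammaSeq (t + b + c) n /
      (Real.GammaSeq (t + c) n * Real.GammaSeq (t + b) n)) atTop
      (𝓝 (Real.Gamma t * Real.Gamma (t + b + c) / (Real.Gamma (t + c) * Real.Gamma (t + b)))) := by
    intro t ht
    refine ((Real.GammaSeq_tendsto_Gamma t).mul (Real.GammaSeq_tendsto_Gamma _)).div
      ((Real.GammaSeq_tendsto_Gamma _).mul (Real.GammaSeq_tendsto_Gamma _)) ?_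
    exact mul_ne_zero (Real.Gamma_pos_of_pos (by linarith)).ne'
      (Real.Gamma_pos_of_pos (by linarith)).ne'
  intro x hx y hy hxy
  simp only [Set.mem_Ioi] at hx hy
  have exa : x - a = x + c := by rw [hc]; ring
  have exb : x + b - a = x + b + c := by rw [hc]; ring
  have eya : y - a = y + c := by rw [hc]; ring
  have eyb : y + b - a = y + b + c := by rw [hc]; ring
  dsimp only
  rw [exa, exb, eya, eyb]
  set r : ℝ := gg x / gg y with hr
  have hggy : 0 < gg y := gg_pos y hy
  have hr1 : 1 < r := by
    rw [hr, lt_div_iff₀ hggy, one_mul]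
    exact gg_anti' x y hx hxy
  have hev : ∀ n : ℕ, 1 ≤ n →
      r * (Real.GammaSeq y n * Real.GammaSeq (y + b + c) n /
        (Real.GammaSeq (y + c) n * Real.GammaSeq (y + b) n)) ≤
      Real.GammaSeq x n * Real.GammaSeq (x + b + c) n /
        (Real.GammaSeq (x + c) n * Real.GammaSeq (x + b) n) := by
    intro n hn
    rw [key x hx n hn, key y hy n hn]
    rw [Finset.prod_range_succ' (fun j : ℕ => gg (x + j)) n,
        Finset.prod_range_succ' (fun j : ℕ => gg (y + j)) n]
    simp only [Nat.cast_zero, add_zero, Nat.cast_add, Nat.cast_one]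
    rw [mul_comm ((∏ j ∈ range n, gg (y + (↑j + 1)))) (gg y), ← mul_assoc, hr,
        div_mul_cancel₀ _ hggy.ne']
    have hprodle : ∏ j ∈ range n, gg (y + (↑j + 1)) ≤ ∏ j ∈ range n, gg (x + (↑j + 1)) := by
      apply Finset.prod_le_prod
      · intro j _; exact (gg_pos _ (by positivity)).le
      · intro j _
        exact gg_anti (x + (↑j + 1)) (y + (↑j + 1)) (by positivity) (by linarith)
    calc gg x * ∏ j ∈ range n, gg (y + (↑j + 1))
        ≤ gg x * ∏ j ∈ range n, gg (x + (↑j + 1)) :=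
          mul_le_mul_of_nonneg_left hprodle (gg_pos x hx).le
      _ = (∏ j ∈ range n, gg (x + (↑j + 1))) * gg x := mul_comm _ _
  have hle : r * (Real.Gamma y * Real.Gamma (y + b + c) / (Real.Gamma (y + c) * Real.Gamma (y + b)))
      ≤ Real.Gamma x * Real.Gamma (x + b + c) / (Real.Gamma (x + c) * Real.Gamma (x + b)) := by
    refine le_of_tendsto_of_tendsto ((hF y hy).const_mul r) (hF x hx) ?_
    filter_upwards [eventually_ge_atTop 1] with n hn using hev n hn
  have hFy := gamma_pos y hy
  nlinarith
end

section
/- Let b > 0 and a ∈ (0,1), and define G(x) = Γ(−x+a)Γ(−x+b+1) / (Γ(−x+1)Γ(−x+b+a)) for real x < a. Then G is strictly monotone increasing on (−∞, a). -/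
open Finset Filter Topology

private lemma prodPos (s : ℝ) (hs : 0 < s) (n : ℕ) :
    0 < ∏ j ∈ range (n + 1), (s + (j : ℝ)) :=
  Finset.prod_pos fun j _ => by positivity

private lemma prod_eq_gammaSeq (s b c : ℝ) (hs : 0 < s) (hb : 0 < b) (hc : 0 < c)
    (n : ℕ) (hn : n ≠ 0) :
    (∏ j ∈ range (n + 1), ((s + c + j) * (s + b + j)) / ((s + j) * (s + b + c + j))) =
      Real.GammaSeq s n * Real.GammaSeq (s + b + c) n /
        (Real.GammaSeq (s + c) n * Real.GammaSeq (s + b) n) := by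
  have hnp : (0:ℝ) < n := by positivity
  have h1 := (prodPos s hs n).ne'
  have h2 := (prodPos (s + c) (by linarith) n).ne'
  have h3 := (prodPos (s + b) (by linarith) n).ne'
  have h4 := (prodPos (s + b + c) (by linarith) n).ne'
  have hfac : (Nat.factorial n : ℝ) ≠ 0 := by positivity
  have hp1 := (Real.rpow_pos_of_pos hnp s).ne'
  have hp2 := (Real.rpow_pos_of_pos hnp (s+c)).ne'
  have hp3 := (Real.rpow_pos_of_pos hnp (s+b)).ne'
  have hp4 := (Real.rpow_pos_of_pos hnp (s+b+c)).ne'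
  have hpows : (n:ℝ) ^ s * (n:ℝ) ^ (s + b + c) = (n:ℝ) ^ (s + c) * (n:ℝ) ^ (s + b) := by
    rw [← Real.rpow_add hnp, ← Real.rpow_add hnp]; ring_nf
  simp only [Real.GammaSeq]
  rw [prod_div_distrib, prod_mul_distrib, prod_mul_distrib]
  field_simp
  linear_combination -hpows

private lemma tendsto_prod (s b c : ℝ) (hs : 0 < s) (hb : 0 < b) (hc : 0 < c) :
    Tendsto (fun n : ℕ => ∏ j ∈ range (n + 1),
        ((s + c + j) * (s + b + j)) / ((s + j) * (s + b + c + j))) atTop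
      (𝓝 (Real.Gamma s * Real.Gamma (s + b + c) /
        (Real.Gamma (s + c) * Real.Gamma (s + b)))) := by
  have hG1 := Real.Gamma_pos_of_pos (show (0:ℝ) < s + c by linarith)
  have hG2 := Real.Gamma_pos_of_pos (show (0:ℝ) < s + b by linarith)
  have hT : Tendsto (fun n : ℕ => Real.GammaSeq s n * Real.GammaSeq (s + b + c) n /
        (Real.GammaSeq (s + c) n * Real.GammaSeq (s + b) n)) atTop
      (𝓝 (Real.Gamma s * Real.Gamma (s + b + c) /
        (Real.Gamma (s + c) * Real.Gamma (s + b)))) :=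
    ((Real.GammaSeq_tendsto_Gamma s).mul (Real.GammaSeq_tendsto_Gamma (s+b+c))).div
      ((Real.GammaSeq_tendsto_Gamma (s+c)).mul (Real.GammaSeq_tendsto_Gamma (s+b)))
      (by positivity)
  refine hT.congr' ?_
  filter_upwards [eventually_ne_atTop 0] with n hn
  exact (prod_eq_gammaSeq s b c hs hb hc n hn).symm

private lemma H_lt (s t b c : ℝ) (hs : 0 < s) (hst : s < t) (hb : 0 < b) (hc : 0 < c) :
    Real.Gamma t * Real.Gamma (t + b + c) / (Real.Gamma (t + c) * Real.Gamma (t + b)) <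
      Real.Gamma s * Real.Gamma (s + b + c) / (Real.Gamma (s + c) * Real.Gamma (s + b)) := by
  set g : ℕ → ℝ → ℝ := fun j x => ((x + c + j) * (x + b + j)) / ((x + j) * (x + b + c + j))
    with hg
  have ht : 0 < t := lt_trans hs hst
  have key : ∀ (j : ℕ) (x : ℝ), 0 < x → g j x = 1 + b * c / ((x + j) * (x + b + c + j)) := by
    intro j x hx
    have h1 : (0:ℝ) < x + j := by positivity
    have h2 : (0:ℝ) < x + b + c + j := by positivity
    simp only [hg]
    field_simp
    ring
  have gmono : ∀ j : ℕ, g j t ≤ g j s := by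
    intro j
    rw [key j t ht, key j s hs]
    have h1 : (0:ℝ) < s + j := by positivity
    have h2 : (0:ℝ) < s + b + c + j := by positivity
    have : b * c / ((t + j) * (t + b + c + j)) ≤ b * c / ((s + j) * (s + b + c + j)) := by
      apply div_le_div_of_nonneg_left (by positivity) (by positivity)
      apply mul_le_mul (by linarith) (by linarith) (by positivity) (by positivity)
    linarith
  have gpos : ∀ (j : ℕ) (x : ℝ), 0 < x → 0 < g j x := by
    intro j x hx
    rw [key j x hx]
    positivity
  have g0lt : g 0 t < g 0 s := by
    rw [key 0 t ht, key 0 s hs]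
    push_cast
    have h1 : (0:ℝ) < s := hs
    have : b * c / ((t + 0) * (t + b + c + 0)) < b * c / ((s + 0) * (s + b + c + 0)) := by
      apply div_lt_div_of_pos_left (by positivity) (by positivity)
      apply mul_lt_mul' (by linarith) (by linarith) (by positivity) (by positivity)
    linarith
  -- product inequality
  have prodIneq : ∀ n : ℕ, (∏ j ∈ range (n + 1), g j t) * g 0 s ≤
      (∏ j ∈ range (n + 1), g j s) * g 0 t := by
    intro n
    rw [Finset.prod_range_succ', Finset.prod_range_succ']
    have hR : (∏ j ∈ range n, g (j + 1) t) ≤ ∏ j ∈ range n, g (j + 1) s :=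
      Finset.prod_le_prod (fun j _ => (gpos (j+1) t ht).le) (fun j _ => gmono (j+1))
    have hRpos : 0 < ∏ j ∈ range n, g (j + 1) t :=
      Finset.prod_pos fun j _ => gpos (j+1) t ht
    have := mul_le_mul_of_nonneg_right hR (mul_pos (gpos 0 t ht) (gpos 0 s hs)).le
    nlinarith [gpos 0 t ht, gpos 0 s hs]
  have hTt := (tendsto_prod t b c ht hb hc).mul_const (g 0 s)
  have hTs := (tendsto_prod s b c hs hb hc).mul_const (g 0 t)
  have lim_le := le_of_tendsto_of_tendsto' hTt hTs prodIneq
  have hHs : 0 < Real.Gamma s * Real.Gamma (s + b + c) /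
      (Real.Gamma (s + c) * Real.Gamma (s + b)) := by
    have := Real.Gamma_pos_of_pos hs
    have := Real.Gamma_pos_of_pos (show (0:ℝ) < s + b + c by linarith)
    have := Real.Gamma_pos_of_pos (show (0:ℝ) < s + c by linarith)
    have := Real.Gamma_pos_of_pos (show (0:ℝ) < s + b by linarith)
    positivity
  have hg0s : 0 < g 0 s := gpos 0 s hs
  nlinarith [lim_le, mul_lt_mul_of_pos_left g0lt hHs]

/-- Let `b > 0` and `a ∈ (0,1)`, and `G x = Γ(−x+a)Γ(−x+b+1)/(Γ(−x+1)Γ(−x+b+a))`.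
Then `G` is strictly monotone increasing on `(−∞, a)`. -/
theorem stmt5 (a b : ℝ) (ha : a ∈ Set.Ioo (0:ℝ) 1) (hb : 0 < b) :
    StrictMonoOn (fun x : ℝ =>
      Real.Gamma (-x + a) * Real.Gamma (-x + b + 1) /
        (Real.Gamma (-x + 1) * Real.Gamma (-x + b + a)))
      (Set.Iio a) := by
  obtain ⟨ha0, ha1⟩ := ha
  intro x hx y hy hxy
  simp only [Set.mem_Iio] at hx hy
  have hc : 0 < 1 - a := by linarith
  have hs : 0 < a - y := by linarith
  have hst : a - y < a - x := by linarith
  have h := H_lt (a - y) (a - x) b (1 - a) hs hst hb hc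
  have e1 : -x + a = a - x := by ring
  have e2 : -x + b + 1 = a - x + b + (1 - a) := by ring
  have e3 : -x + 1 = a - x + (1 - a) := by ring
  have e4 : -x + b + a = a - x + b := by ring
  have f1 : -y + a = a - y := by ring
  have f2 : -y + b + 1 = a - y + b + (1 - a) := by ring
  have f3 : -y + 1 = a - y + (1 - a) := by ring
  have f4 : -y + b + a = a - y + b := by ring
  simp only [e1, e2, e3, e4, f1, f2, f3, f4]
  exact h
end

section
/- Let b > 0 and a > 1, and define G(x) = Γ(−x+a)Γ(−x+b+1) / (Γ(−x+1)Γ(−x+b+a)) for real x < 1. Then G is strictly monotone decreasing on (−∞, 1). -/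
open Filter Finset Real Topology

namespace Stmt6Aux

/-- The `j`-th factor in the Euler-product representation of
`Γ(y+s)Γ(y+t)/(Γ(y)Γ(y+s+t))`. -/
noncomputable def f (s t y : ℝ) (j : ℕ) : ℝ :=
  ((y + j) * (y + s + t + j)) / ((y + s + j) * (y + t + j))

lemma f_nonneg {s t y : ℝ} (hs : 0 < s) (ht : 0 < t) (hy : 0 < y) (j : ℕ) :
    0 ≤ f s t y j := by
  have hj : (0:ℝ) ≤ j := Nat.cast_nonneg j
  unfold f
  positivity

lemma f_mono {s t : ℝ} (hs : 0 < s) (ht : 0 < t) {y₁ y₂ : ℝ} (h2 : 0 < y₂)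
    (h : y₂ ≤ y₁) (j : ℕ) : f s t y₂ j ≤ f s t y₁ j := by
  have h1 : 0 < y₁ := lt_of_lt_of_le h2 h
  have hj : (0:ℝ) ≤ j := Nat.cast_nonneg j
  have d2 : 0 < (y₂ + s + j) * (y₂ + t + j) := by positivity
  have d1 : 0 < (y₁ + s + j) * (y₁ + t + j) := by positivity
  rw [f, f, div_le_div_iff₀ d2 d1]
  have key : (y₁ + j) * (y₁ + s + t + j) * ((y₂ + s + j) * (y₂ + t + j))
      - (y₂ + j) * (y₂ + s + t + j) * ((y₁ + s + j) * (y₁ + t + j))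
      = s * t * (y₁ - y₂) * (y₁ + y₂ + s + t + 2 * j) := by ring
  nlinarith [mul_nonneg (mul_nonneg (mul_nonneg hs.le ht.le) (sub_nonneg.2 h))
    (by positivity : (0:ℝ) ≤ y₁ + y₂ + s + t + 2 * (j:ℝ))]

lemma f_strictMono {s t : ℝ} (hs : 0 < s) (ht : 0 < t) {y₁ y₂ : ℝ} (h2 : 0 < y₂)
    (h : y₂ < y₁) (j : ℕ) : f s t y₂ j < f s t y₁ j := by
  have h1 : 0 < y₁ := lt_trans h2 h
  have hj : (0:ℝ) ≤ j := Nat.cast_nonneg j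
  have d2 : 0 < (y₂ + s + j) * (y₂ + t + j) := by positivity
  have d1 : 0 < (y₁ + s + j) * (y₁ + t + j) := by positivity
  rw [f, f, div_lt_div_iff₀ d2 d1]
  nlinarith [mul_pos (mul_pos (mul_pos hs ht) (sub_pos.2 h))
    (by positivity : (0:ℝ) < y₁ + y₂ + s + t + 2 * (j:ℝ))]

lemma f_pos {s t y : ℝ} (hs : 0 < s) (ht : 0 < t) (hy : 0 < y) (j : ℕ) :
    0 < f s t y j := by
  have hj : (0:ℝ) ≤ j := Nat.cast_nonneg j
  unfold f
  positivity

/-- Partial products. -/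
noncomputable def Q (s t y : ℝ) (n : ℕ) : ℝ := ∏ j ∈ Finset.range (n + 1), f s t y j

lemma prod_ne_zero {y : ℝ} (hy : 0 < y) (n : ℕ) :
    ∏ j ∈ Finset.range (n + 1), (y + (j : ℝ)) ≠ 0 := by
  apply Finset.prod_ne_zero_iff.mpr
  intro j _
  have hj : (0:ℝ) ≤ j := Nat.cast_nonneg j
  positivity

lemma Q_eq {s t y : ℝ} (hs : 0 < s) (ht : 0 < t) (hy : 0 < y) {n : ℕ} (hn : 1 ≤ n) :
    Real.GammaSeq (y + s) n * Real.GammaSeq (y + t) n /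
      (Real.GammaSeq y n * Real.GammaSeq (y + s + t) n) = Q s t y n := by
  have hn0 : (0:ℝ) < n := by exact_mod_cast hn
  have hfact : (Nat.factorial n : ℝ) ≠ 0 := by exact_mod_cast Nat.factorial_ne_zero n
  have hys : 0 < y + s := by linarith
  have hyt : 0 < y + t := by linarith
  have hyst : 0 < y + s + t := by linarith
  have P1 := prod_ne_zero hy n
  have P2 := prod_ne_zero hys n
  have P3 := prod_ne_zero hyt n
  have P4 := prod_ne_zero hyst n
  have e2 : ∀ j : ℕ, y + s + (j:ℝ) = (y + s) + j := fun j => by ring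
  have hQ : Q s t y n = (∏ j ∈ Finset.range (n+1), (y + (j:ℝ))) *
      (∏ j ∈ Finset.range (n+1), (y + s + t + (j:ℝ))) /
      ((∏ j ∈ Finset.range (n+1), (y + s + (j:ℝ))) *
       (∏ j ∈ Finset.range (n+1), (y + t + (j:ℝ)))) := by
    rw [Q]
    rw [← Finset.prod_mul_distrib, ← Finset.prod_mul_distrib, ← Finset.prod_div_distrib]
    rfl
  have hr1 : (n:ℝ) ^ (y + s) = (n:ℝ) ^ y * (n:ℝ) ^ s := Real.rpow_add hn0 _ _
  have hr2 : (n:ℝ) ^ (y + t) = (n:ℝ) ^ y * (n:ℝ) ^ t := Real.rpow_add hn0 _ _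
  have hr3 : (n:ℝ) ^ (y + s + t) = (n:ℝ) ^ y * (n:ℝ) ^ s * (n:ℝ) ^ t := by
    rw [Real.rpow_add hn0, Real.rpow_add hn0]
  have h1 : (n:ℝ) ^ y ≠ 0 := (Real.rpow_pos_of_pos hn0 _).ne'
  have h2 : (n:ℝ) ^ s ≠ 0 := (Real.rpow_pos_of_pos hn0 _).ne'
  have h3 : (n:ℝ) ^ t ≠ 0 := (Real.rpow_pos_of_pos hn0 _).ne'
  rw [hQ, Real.GammaSeq, Real.GammaSeq, Real.GammaSeq, Real.GammaSeq, hr1, hr2, hr3]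
  field_simp

lemma Q_tendsto {s t y : ℝ} (hs : 0 < s) (ht : 0 < t) (hy : 0 < y) :
    Tendsto (Q s t y) atTop (𝓝 (Real.Gamma (y + s) * Real.Gamma (y + t) /
      (Real.Gamma y * Real.Gamma (y + s + t)))) := by
  have hne : Real.Gamma y * Real.Gamma (y + s + t) ≠ 0 :=
    (mul_pos (Real.Gamma_pos_of_pos hy) (Real.Gamma_pos_of_pos (by linarith))).ne'
  have T := (((Real.GammaSeq_tendsto_Gamma (y + s)).mul
      (Real.GammaSeq_tendsto_Gamma (y + t))).div
      ((Real.GammaSeq_tendsto_Gamma y).mul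
      (Real.GammaSeq_tendsto_Gamma (y + s + t))) hne)
  refine T.congr' ?_
  filter_upwards [eventually_ge_atTop 1] with n hn
  exact Q_eq hs ht hy hn

lemma Q_le {s t : ℝ} (hs : 0 < s) (ht : 0 < t) {y₁ y₂ : ℝ} (h2 : 0 < y₂)
    (h : y₂ < y₁) (n : ℕ) :
    Q s t y₂ n * (f s t y₁ 0 / f s t y₂ 0) ≤ Q s t y₁ n := by
  have h1 : 0 < y₁ := lt_trans h2 h
  have hf20 : 0 < f s t y₂ 0 := f_pos hs ht h2 0
  rw [Q, Q, Finset.prod_range_succ', Finset.prod_range_succ']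
  have hle : ∏ i ∈ Finset.range n, f s t y₂ (i + 1) ≤
      ∏ i ∈ Finset.range n, f s t y₁ (i + 1) := by
    apply Finset.prod_le_prod
    · intro i _; exact f_nonneg hs ht h2 _
    · intro i _; exact f_mono hs ht h2 h.le _
  calc (∏ i ∈ Finset.range n, f s t y₂ (i+1)) * f s t y₂ 0 * (f s t y₁ 0 / f s t y₂ 0)
      = (∏ i ∈ Finset.range n, f s t y₂ (i+1)) * f s t y₁ 0 := by
        field_simp
    _ ≤ (∏ i ∈ Finset.range n, f s t y₁ (i+1)) * f s t y₁ 0 := by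
        apply mul_le_mul_of_nonneg_right hle (f_nonneg hs ht h1 0)

lemma H_lt {s t : ℝ} (hs : 0 < s) (ht : 0 < t) {y₁ y₂ : ℝ} (h2 : 0 < y₂)
    (h : y₂ < y₁) :
    Real.Gamma (y₂ + s) * Real.Gamma (y₂ + t) / (Real.Gamma y₂ * Real.Gamma (y₂ + s + t))
      < Real.Gamma (y₁ + s) * Real.Gamma (y₁ + t) /
        (Real.Gamma y₁ * Real.Gamma (y₁ + s + t)) := by
  have h1 : 0 < y₁ := lt_trans h2 h
  set c := f s t y₁ 0 / f s t y₂ 0 with hc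
  have hc1 : 1 < c := (one_lt_div (f_pos hs ht h2 0)).mpr (f_strictMono hs ht h2 h 0)
  set H₂ := Real.Gamma (y₂ + s) * Real.Gamma (y₂ + t) /
      (Real.Gamma y₂ * Real.Gamma (y₂ + s + t)) with hH2
  set H₁ := Real.Gamma (y₁ + s) * Real.Gamma (y₁ + t) /
      (Real.Gamma y₁ * Real.Gamma (y₁ + s + t)) with hH1
  have hH2pos : 0 < H₂ := by
    rw [hH2]
    have := Real.Gamma_pos_of_pos h2
    have := Real.Gamma_pos_of_pos (show 0 < y₂ + s by linarith)
    have := Real.Gamma_pos_of_pos (show 0 < y₂ + t by linarith)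
    have := Real.Gamma_pos_of_pos (show 0 < y₂ + s + t by linarith)
    positivity
  have hle : H₂ * c ≤ H₁ := by
    refine le_of_tendsto_of_tendsto' ((Q_tendsto hs ht h2).mul_const c)
      (Q_tendsto hs ht h1) (fun n => Q_le hs ht h2 h n)
  calc H₂ = H₂ * 1 := (mul_one _).symm
    _ < H₂ * c := by exact (mul_lt_mul_iff_right₀ hH2pos).mpr hc1
    _ ≤ H₁ := hle

end Stmt6Aux

/-- Let `b > 0` and `a > 1`, and `G x = Γ(−x+a)Γ(−x+b+1)/(Γ(−x+1)Γ(−x+b+a))`.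
Then `G` is strictly monotone decreasing on `(−∞, 1)`. -/
theorem stmt6 (a b : ℝ) (ha : 1 < a) (hb : 0 < b) :
    StrictAntiOn (fun x : ℝ =>
      Real.Gamma (-x + a) * Real.Gamma (-x + b + 1) /
        (Real.Gamma (-x + 1) * Real.Gamma (-x + b + a)))
      (Set.Iio 1) := by
  intro x₁ hx₁ x₂ hx₂ hlt
  simp only [Set.mem_Iio] at hx₁ hx₂
  have h2 : (0:ℝ) < -x₂ + 1 := by linarith
  have h : -x₂ + 1 < -x₁ + 1 := by linarith
  have key := Stmt6Aux.H_lt (s := a - 1) (t := b) (by linarith) hb h2 h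
  have e1 : -x₂ + 1 + (a - 1) = -x₂ + a := by ring
  have e2 : -x₂ + 1 + b = -x₂ + b + 1 := by ring
  have e3 : -x₂ + a + b = -x₂ + b + a := by ring
  have e4 : -x₁ + 1 + (a - 1) = -x₁ + a := by ring
  have e5 : -x₁ + 1 + b = -x₁ + b + 1 := by ring
  have e6 : -x₁ + a + b = -x₁ + b + a := by ring
  rw [e1, e2, e3, e4, e5, e6] at key
  exact key
end

section
/- Let k ∈ ℤ and let φ be a radial function in L¹(D, dA) with Mellin transform φ̂. For the Toeplitz operator T_{e^{ikθ}φ} on the harmonic Bergman space of the unit disk, and any natural number n: T_{e^{ikθ}φ}(z^n) = 2(n+k+1)φ̂(2n+k+2)·z^{n+k} if n ≥ −k, and T_{e^{ikθ}φ}(z^n) = 2(−n−k+1)φ̂(−k+2)·z̄^{−n−k} if n < −k. -/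
open MeasureTheory Complex
open Real

/-- The orthogonal projection `Q` of `L²(D,dA)` (normalized area measure on the unit disk)
onto the harmonic Bergman space, given by its integral kernel
`R(z,w) = 1/(1−z w̄)² + 1/(1−z̄ w)² − 1`. -/
noncomputable def harmProj (f : ℂ → ℂ) (z : ℂ) : ℂ :=
  (Real.pi : ℂ)⁻¹ * ∫ w in Metric.ball (0:ℂ) 1,
    (((1 - z * (starRingEnd ℂ) w) ^ 2)⁻¹ + ((1 - (starRingEnd ℂ) z * w) ^ 2)⁻¹ - 1) * f w

/-- The Mellin transform `φ̂(s) = ∫₀¹ φ(r) r^{s−1} dr` of a radial function. -/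
noncomputable def mellinT (φ : ℝ → ℂ) (s : ℂ) : ℂ :=
  ∫ r in Set.Ioo (0:ℝ) 1, φ r * (r : ℂ) ^ (s - 1)

/-- The quasihomogeneous symbol `e^{ikθ} φ(r)` in cartesian coordinates. -/
noncomputable def qhSymb (k : ℤ) (φ : ℝ → ℂ) (w : ℂ) : ℂ :=
  (w / (‖w‖ : ℂ)) ^ k * φ ‖w‖


lemma intExpIoo (m : ℤ) :
    ∫ θ in Set.Ioo (-π) π, Complex.exp ((m:ℂ) * θ * I) =
      if m = 0 then (2*π : ℂ) else 0 := by
  rcases eq_or_ne m 0 with hm | hm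
  · simp only [hm, Int.cast_zero, zero_mul, Complex.exp_zero, if_pos rfl]
    rw [setIntegral_const, Real.volume_real_Ioo,
      max_eq_left (by linarith [Real.pi_pos] : (0:ℝ) ≤ π - -π)]
    rw [Complex.real_smul]
    push_cast
    ring
  · rw [if_neg hm]
    have h1 : ∫ θ in Set.Ioo (-π) π, Complex.exp ((m:ℂ) * θ * I)
        = ∫ θ in (-π)..π, Complex.exp (((m:ℂ) * I) * θ) := by
      rw [intervalIntegral.integral_of_le (by linarith [Real.pi_pos]),
        ← integral_Ioc_eq_integral_Ioo]
      congr 1; ext θ; ring_nf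
    rw [h1, integral_exp_mul_complex (by simp [hm, Complex.ext_iff])]
    have : Complex.exp ((m:ℂ) * I * π) = Complex.exp ((m:ℂ) * I * (-π)) := by
      rw [show ((m:ℂ) * I * π) = (m:ℂ) * I * (-π) + m * (2 * π * I) by ring,
        Complex.exp_add, Complex.exp_int_mul_two_pi_mul_I, mul_one]
    rw [this]
    simp

lemma hasSumInvSq {x : ℂ} (hx : ‖x‖ < 1) :
    HasSum (fun j : ℕ => ((j:ℂ)+1) * x ^ j) (((1-x)^2)⁻¹) := by
  have h := hasSum_choose_mul_geometric_of_norm_lt_one 1 hx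
  have h2 : (1:ℂ)/(1-x)^(1+1) = ((1-x)^2)⁻¹ := by rw [one_div]
  rw [h2] at h
  convert h using 1
  · rfl
  funext j
  rw [Nat.choose_one_right]
  push_cast
  ring

lemma normExpIntMulI (m : ℤ) (θ : ℝ) : ‖Complex.exp ((m:ℂ) * θ * I)‖ = 1 := by
  rw [show ((m:ℂ) * θ * I) = ((m*θ : ℝ):ℂ) * I by push_cast; ring]
  simpa using Complex.norm_exp_ofReal_mul_I (m*θ)

lemma contIntIoo {f : ℝ → ℂ} (hf : Continuous f) : IntegrableOn f (Set.Ioo (-π) π) :=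
  (hf.integrableOn_Icc).mono_set Set.Ioo_subset_Icc_self

lemma angA (a : ℂ) (ha : ‖a‖ < 1) (M : ℤ) :
    ∫ θ in Set.Ioo (-π) π,
        Complex.exp ((M:ℂ) * θ * I) * (((1 - a * Complex.exp (-(θ:ℂ) * I)) ^ 2)⁻¹) =
      if 0 ≤ M then 2 * (π:ℂ) * (M + 1) * a ^ M.toNat else 0 := by
  set F : ℕ → ℝ → ℂ := fun j θ => ((j:ℂ)+1) * a ^ j * Complex.exp (((M - j : ℤ):ℂ) * θ * I)
    with hF
  have hpt : ∀ θ : ℝ, Complex.exp ((M:ℂ) * θ * I) * (((1 - a * Complex.exp (-(θ:ℂ) * I)) ^ 2)⁻¹)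
      = ∑' j, F j θ := by
    intro θ
    have hx : ‖a * Complex.exp (-(θ:ℂ) * I)‖ < 1 := by
      rw [norm_mul, show (-(θ:ℂ) * I) = (((-1 : ℤ):ℂ) * θ * I) by push_cast; ring,
        normExpIntMulI (-1) θ]
      simpa using ha
    have hs := (hasSumInvSq hx).mul_left (Complex.exp ((M:ℂ) * θ * I))
    rw [← hs.tsum_eq]
    congr 1; funext j
    rw [hF]
    simp only [mul_pow, ← Complex.exp_nat_mul]
    rw [show ((M - j : ℤ):ℂ) * θ * I = (M:ℂ)*θ*I + (j:ℂ)*(-(θ:ℂ)*I) by push_cast; ring,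
      Complex.exp_add]
    ring
  have hmeas : ∀ j, Integrable (F j) (volume.restrict (Set.Ioo (-π) π)) := by
    intro j
    exact contIntIoo (by fun_prop)
  have hnorm : ∀ j, (∫ θ in Set.Ioo (-π) π, ‖F j θ‖) = ((j:ℝ)+1) * ‖a‖^j * (2*π) := by
    intro j
    have he : ∀ θ : ℝ, ‖F j θ‖ = ((j:ℝ)+1) * ‖a‖^j := by
      intro θ
      rw [hF]
      simp only [norm_mul, norm_pow, normExpIntMulI (M - j) θ, mul_one]
      congr 1
      rw [show ((j:ℂ)+1) = ((j+1:ℕ):ℂ) by push_cast; ring]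
      rw [Complex.norm_natCast]
      push_cast
      ring
    simp only [he]
    rw [setIntegral_const, Real.volume_real_Ioo,
      max_eq_left (by linarith [Real.pi_pos] : (0:ℝ) ≤ π - -π), smul_eq_mul]
    ring
  have hsum : Summable (fun j => ∫ θ in Set.Ioo (-π) π, ‖F j θ‖) := by
    simp only [hnorm]
    apply Summable.mul_right
    have := (hasSum_choose_mul_geometric_of_norm_lt_one (𝕜 := ℝ) 1
      (by simpa using ha : ‖‖a‖‖ < 1)).summable
    apply this.congr
    intro j
    rw [Nat.choose_one_right]
    push_cast
    ring
  have hswap := integral_tsum_of_summable_integral_norm hmeas hsum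
  have hint : ∀ j, (∫ θ in Set.Ioo (-π) π, F j θ)
      = ((j:ℂ)+1) * a ^ j * (if (M - j : ℤ) = 0 then (2*π:ℂ) else 0) := by
    intro j
    rw [hF]
    simp only
    rw [integral_const_mul, intExpIoo]
  calc ∫ θ in Set.Ioo (-π) π,
        Complex.exp ((M:ℂ) * θ * I) * (((1 - a * Complex.exp (-(θ:ℂ) * I)) ^ 2)⁻¹)
      = ∫ θ in Set.Ioo (-π) π, ∑' j, F j θ := by
        apply setIntegral_congr_fun measurableSet_Ioo
        intro θ _
        exact hpt θ
    _ = ∑' j, ∫ θ in Set.Ioo (-π) π, F j θ := hswap.symm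
    _ = ∑' j : ℕ, ((j:ℂ)+1) * a ^ j * (if (M - j : ℤ) = 0 then (2*π:ℂ) else 0) := by
        simp only [hint]
    _ = if 0 ≤ M then 2 * (π:ℂ) * (M + 1) * a ^ M.toNat else 0 := by
        rcases le_or_gt 0 M with hM | hM
        · rw [if_pos hM]
          rw [tsum_eq_single M.toNat]
          · rw [if_pos (by omega : M - (M.toNat : ℤ) = 0)]
            rw [show ((M.toNat : ℕ):ℂ) = (M:ℂ) by
              rw [← Int.cast_natCast, Int.toNat_of_nonneg hM]]
            ring
          · intro j hj
            rw [if_neg (by omega : ¬ (M - (j:ℤ) = 0)), mul_zero]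
        · rw [if_neg (not_le.mpr hM)]
          have : ∀ j : ℕ, ((j:ℂ)+1) * a ^ j * (if (M - j : ℤ) = 0 then (2*π:ℂ) else 0) = 0 := by
            intro j
            rw [if_neg (by omega : ¬ (M - (j:ℤ) = 0)), mul_zero]
          rw [tsum_congr this, tsum_zero]

lemma angB (a : ℂ) (ha : ‖a‖ < 1) (M : ℤ) :
    ∫ θ in Set.Ioo (-π) π,
        Complex.exp ((M:ℂ) * θ * I) * (((1 - a * Complex.exp ((θ:ℂ) * I)) ^ 2)⁻¹) =
      if M ≤ 0 then 2 * (π:ℂ) * (1 - M) * a ^ (-M).toNat else 0 := by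
  set F : ℕ → ℝ → ℂ := fun j θ => ((j:ℂ)+1) * a ^ j * Complex.exp (((M + j : ℤ):ℂ) * θ * I)
    with hF
  have hpt : ∀ θ : ℝ, Complex.exp ((M:ℂ) * θ * I) * (((1 - a * Complex.exp ((θ:ℂ) * I)) ^ 2)⁻¹)
      = ∑' j, F j θ := by
    intro θ
    have hx : ‖a * Complex.exp ((θ:ℂ) * I)‖ < 1 := by
      rw [norm_mul, show ((θ:ℂ) * I) = (((1 : ℤ):ℂ) * θ * I) by push_cast; ring,
        normExpIntMulI 1 θ]
      simpa using ha
    have hs := (hasSumInvSq hx).mul_left (Complex.exp ((M:ℂ) * θ * I))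
    rw [← hs.tsum_eq]
    congr 1; funext j
    rw [hF]
    simp only [mul_pow, ← Complex.exp_nat_mul]
    rw [show ((M + j : ℤ):ℂ) * θ * I = (M:ℂ)*θ*I + (j:ℂ)*((θ:ℂ)*I) by push_cast; ring,
      Complex.exp_add]
    ring
  have hmeas : ∀ j, Integrable (F j) (volume.restrict (Set.Ioo (-π) π)) := by
    intro j
    exact contIntIoo (by fun_prop)
  have hnorm : ∀ j, (∫ θ in Set.Ioo (-π) π, ‖F j θ‖) = ((j:ℝ)+1) * ‖a‖^j * (2*π) := by
    intro j
    have he : ∀ θ : ℝ, ‖F j θ‖ = ((j:ℝ)+1) * ‖a‖^j := by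
      intro θ
      rw [hF]
      simp only [norm_mul, norm_pow, normExpIntMulI (M + j) θ, mul_one]
      congr 1
      rw [show ((j:ℂ)+1) = ((j+1:ℕ):ℂ) by push_cast; ring]
      rw [Complex.norm_natCast]
      push_cast
      ring
    simp only [he]
    rw [setIntegral_const, Real.volume_real_Ioo,
      max_eq_left (by linarith [Real.pi_pos] : (0:ℝ) ≤ π - -π), smul_eq_mul]
    ring
  have hsum : Summable (fun j => ∫ θ in Set.Ioo (-π) π, ‖F j θ‖) := by
    simp only [hnorm]
    apply Summable.mul_right
    have := (hasSum_choose_mul_geometric_of_norm_lt_one (𝕜 := ℝ) 1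
      (by simpa using ha : ‖‖a‖‖ < 1)).summable
    apply this.congr
    intro j
    rw [Nat.choose_one_right]
    push_cast
    ring
  have hswap := integral_tsum_of_summable_integral_norm hmeas hsum
  have hint : ∀ j, (∫ θ in Set.Ioo (-π) π, F j θ)
      = ((j:ℂ)+1) * a ^ j * (if (M + j : ℤ) = 0 then (2*π:ℂ) else 0) := by
    intro j
    rw [hF]
    simp only
    rw [integral_const_mul, intExpIoo]
  calc ∫ θ in Set.Ioo (-π) π,
        Complex.exp ((M:ℂ) * θ * I) * (((1 - a * Complex.exp ((θ:ℂ) * I)) ^ 2)⁻¹)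
      = ∫ θ in Set.Ioo (-π) π, ∑' j, F j θ := by
        apply setIntegral_congr_fun measurableSet_Ioo
        intro θ _
        exact hpt θ
    _ = ∑' j, ∫ θ in Set.Ioo (-π) π, F j θ := hswap.symm
    _ = ∑' j : ℕ, ((j:ℂ)+1) * a ^ j * (if (M + j : ℤ) = 0 then (2*π:ℂ) else 0) := by
        simp only [hint]
    _ = if M ≤ 0 then 2 * (π:ℂ) * (1 - M) * a ^ (-M).toNat else 0 := by
        rcases le_or_gt M 0 with hM | hM
        · rw [if_pos hM]
          rw [tsum_eq_single (-M).toNat]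
          · rw [if_pos (by omega : M + ((-M).toNat : ℤ) = 0)]
            rw [show (((-M).toNat : ℕ):ℂ) = (-M:ℂ) by
              rw [← Int.cast_natCast, Int.toNat_of_nonneg (by omega)]; push_cast; ring]
            ring
          · intro j hj
            rw [if_neg (by omega : ¬ (M + (j:ℤ) = 0)), mul_zero]
        · rw [if_neg (not_le.mpr hM)]
          have : ∀ j : ℕ, ((j:ℂ)+1) * a ^ j * (if (M + j : ℤ) = 0 then (2*π:ℂ) else 0) = 0 := by
            intro j
            rw [if_neg (by omega : ¬ (M + (j:ℤ) = 0)), mul_zero]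
          rw [tsum_congr this, tsum_zero]

lemma contInv1 (a : ℂ) (ha : ‖a‖ < 1) (e : ℝ) :
    Continuous (fun θ : ℝ => (((1 - a * Complex.exp ((e:ℂ) * θ * I)) ^ 2)⁻¹)) := by
  apply Continuous.inv₀ (by fun_prop)
  intro θ
  apply pow_ne_zero
  intro h
  have h2 : a * Complex.exp ((e:ℂ) * θ * I) = 1 := by
    have := sub_eq_zero.mp h
    exact this.symm
  have : ‖a * Complex.exp ((e:ℂ) * θ * I)‖ = 1 := by rw [h2]; simp
  rw [norm_mul, show ((e:ℂ) * θ * I) = (((e*θ:ℝ)):ℂ) * I by push_cast; ring] at this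
  have h3 : ‖Complex.exp (((e*θ:ℝ):ℂ) * I)‖ = 1 := by
    simpa using Complex.norm_exp_ofReal_mul_I (e*θ)
  rw [h3, mul_one] at this
  exact absurd this (ne_of_lt ha)

lemma innerInt (a b : ℂ) (ha : ‖a‖ < 1) (hb : ‖b‖ < 1) (M : ℤ) :
    ∫ θ in Set.Ioo (-π) π,
        (((1 - a * Complex.exp (-(θ:ℂ) * I)) ^ 2)⁻¹
          + ((1 - b * Complex.exp ((θ:ℂ) * I)) ^ 2)⁻¹ - 1) * Complex.exp ((M:ℂ) * θ * I)
      = if 0 ≤ M then 2 * (π:ℂ) * (M + 1) * a ^ M.toNat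
        else 2 * (π:ℂ) * (1 - M) * b ^ (-M).toNat := by
  have c1 : Continuous (fun θ : ℝ => (((1 - a * Complex.exp (-(θ:ℂ) * I)) ^ 2)⁻¹)) := by
    have := contInv1 a ha (-1)
    convert this using 3 with θ
    push_cast; ring_nf
  have c2 : Continuous (fun θ : ℝ => (((1 - b * Complex.exp ((θ:ℂ) * I)) ^ 2)⁻¹)) := by
    have := contInv1 b hb 1
    convert this using 3 with θ
    push_cast; ring_nf
  have ce : Continuous (fun θ : ℝ => Complex.exp ((M:ℂ) * θ * I)) := by fun_prop
  have i1 : IntegrableOn (fun θ : ℝ => Complex.exp ((M:ℂ) * θ * I)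
      * (((1 - a * Complex.exp (-(θ:ℂ) * I)) ^ 2)⁻¹)) (Set.Ioo (-π) π) :=
    contIntIoo (ce.mul c1)
  have i2 : IntegrableOn (fun θ : ℝ => Complex.exp ((M:ℂ) * θ * I)
      * (((1 - b * Complex.exp ((θ:ℂ) * I)) ^ 2)⁻¹)) (Set.Ioo (-π) π) :=
    contIntIoo (ce.mul c2)
  have i3 : IntegrableOn (fun θ : ℝ => Complex.exp ((M:ℂ) * θ * I)) (Set.Ioo (-π) π) :=
    contIntIoo ce
  have hsplit : ∀ θ : ℝ,
      (((1 - a * Complex.exp (-(θ:ℂ) * I)) ^ 2)⁻¹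
          + ((1 - b * Complex.exp ((θ:ℂ) * I)) ^ 2)⁻¹ - 1) * Complex.exp ((M:ℂ) * θ * I)
      = Complex.exp ((M:ℂ) * θ * I) * (((1 - a * Complex.exp (-(θ:ℂ) * I)) ^ 2)⁻¹)
        + Complex.exp ((M:ℂ) * θ * I) * (((1 - b * Complex.exp ((θ:ℂ) * I)) ^ 2)⁻¹)
        - Complex.exp ((M:ℂ) * θ * I) := fun θ => by ring
  rw [setIntegral_congr_fun measurableSet_Ioo (fun θ _ => hsplit θ)]
  have h4 : (∫ θ in Set.Ioo (-π) π,
      (Complex.exp ((M:ℂ) * θ * I) * (((1 - a * Complex.exp (-(θ:ℂ) * I)) ^ 2)⁻¹)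
        + Complex.exp ((M:ℂ) * θ * I) * (((1 - b * Complex.exp ((θ:ℂ) * I)) ^ 2)⁻¹)
        - Complex.exp ((M:ℂ) * θ * I)))
      = (∫ θ in Set.Ioo (-π) π,
          (Complex.exp ((M:ℂ) * θ * I) * (((1 - a * Complex.exp (-(θ:ℂ) * I)) ^ 2)⁻¹)
            + Complex.exp ((M:ℂ) * θ * I) * (((1 - b * Complex.exp ((θ:ℂ) * I)) ^ 2)⁻¹)))
        - ∫ θ in Set.Ioo (-π) π, Complex.exp ((M:ℂ) * θ * I) := integral_sub (i1.add i2) i3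
  have h5 : (∫ θ in Set.Ioo (-π) π,
      (Complex.exp ((M:ℂ) * θ * I) * (((1 - a * Complex.exp (-(θ:ℂ) * I)) ^ 2)⁻¹)
        + Complex.exp ((M:ℂ) * θ * I) * (((1 - b * Complex.exp ((θ:ℂ) * I)) ^ 2)⁻¹)))
      = (∫ θ in Set.Ioo (-π) π,
          Complex.exp ((M:ℂ) * θ * I) * (((1 - a * Complex.exp (-(θ:ℂ) * I)) ^ 2)⁻¹))
        + ∫ θ in Set.Ioo (-π) π,
            Complex.exp ((M:ℂ) * θ * I) * (((1 - b * Complex.exp ((θ:ℂ) * I)) ^ 2)⁻¹) :=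
    integral_add i1 i2
  rw [h4, h5, angA a ha M, angB b hb M, intExpIoo M]
  rcases lt_trichotomy M 0 with hM | hM | hM
  · rw [if_neg (by omega), if_pos (by omega), if_neg (by omega), if_neg (by omega)]
    ring
  · subst hM
    rw [if_pos le_rfl, if_pos le_rfl, if_pos rfl, if_pos le_rfl]
    norm_num
  · rw [if_pos (by omega), if_neg (by omega), if_neg (by omega), if_pos (by omega)]
    ring


lemma hsymmPolar (p : ℝ × ℝ) :
    Complex.polarCoord.symm p = (p.1:ℂ) * Complex.exp ((p.2:ℂ) * I) := by
  rw [Complex.polarCoord_symm_apply, Complex.exp_mul_I, ← Complex.ofReal_cos,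
    ← Complex.ofReal_sin]

lemma normRexp (r θ : ℝ) : ‖(r:ℂ) * Complex.exp ((θ:ℂ) * I)‖ = |r| := by
  rw [norm_mul, show ‖Complex.exp ((θ:ℂ)*I)‖ = 1 from by
    simpa using Complex.abs_exp_ofReal_mul_I θ]
  simp

lemma keyPolar (k : ℤ) (n : ℕ) (z : ℂ) (hz : ‖z‖ < 1) (φ ψ : ℝ → ℂ)
    (hψm : StronglyMeasurable ψ)
    (hψφ : ∀ᵐ r ∂(volume.restrict (Set.Ioo (0:ℝ) 1)), φ r = ψ r)
    (hψr : Integrable (fun r => ψ r * (r:ℂ)) (volume.restrict (Set.Ioo (0:ℝ) 1))) :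
    (∫ w in Metric.ball (0:ℂ) 1,
      (((1 - z * (starRingEnd ℂ) w) ^ 2)⁻¹ + ((1 - (starRingEnd ℂ) z * w) ^ 2)⁻¹ - 1)
        * (qhSymb k φ w * w ^ n))
    = ∫ r in Set.Ioo (0:ℝ) 1, (ψ r * (r:ℂ)^(n+1)) *
        (if 0 ≤ (n:ℤ) + k
         then 2 * (π:ℂ) * (((n:ℤ) + k : ℤ) + 1) * (z * (r:ℂ)) ^ ((n:ℤ) + k).toNat
         else 2 * (π:ℂ) * (1 - ((n:ℤ) + k : ℤ)) *
           ((starRingEnd ℂ) z * (r:ℂ)) ^ (-((n:ℤ) + k)).toNat) := by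
  set s : Set ℝ := Set.Ioo 0 1 with hs
  set t : Set ℝ := Set.Ioo (-π) π with ht
  set M : ℤ := (n:ℤ) + k with hM
  set Kf : ℂ → ℂ := fun w =>
    (((1 - z * (starRingEnd ℂ) w) ^ 2)⁻¹ + ((1 - (starRingEnd ℂ) z * w) ^ 2)⁻¹ - 1)
      * (qhSymb k φ w * w ^ n) with hKf
  set G : ℝ × ℝ → ℂ := fun p =>
    (((1 - z * (p.1:ℂ) * Complex.exp (-(p.2:ℂ) * I)) ^ 2)⁻¹
      + ((1 - (starRingEnd ℂ) z * (p.1:ℂ) * Complex.exp ((p.2:ℂ) * I)) ^ 2)⁻¹ - 1)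
      * Complex.exp ((M:ℂ) * p.2 * I) with hG
  set Fφ : ℝ × ℝ → ℂ := fun p => (φ p.1 * (p.1:ℂ)^(n+1)) * G p with hFφ
  set Fψ : ℝ × ℝ → ℂ := fun p => (ψ p.1 * (p.1:ℂ)^(n+1)) * G p with hFψ
  have hcont : Continuous (fun p : ℝ × ℝ => (p.1:ℂ) * Complex.exp ((p.2:ℂ) * I)) := by
    fun_prop
  -- Step 1-3 : polar coordinates
  have step3 : (∫ w in Metric.ball (0:ℂ) 1, Kf w)
      = ∫ p in s ×ˢ t, p.1 • Kf (Complex.polarCoord.symm p) := by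
    rw [← integral_indicator measurableSet_ball,
      ← Complex.integral_comp_polarCoord_symm (Set.indicator (Metric.ball 0 1) Kf)]
    have hEeq : Complex.polarCoord.symm ⁻¹' Metric.ball (0:ℂ) 1
        = (fun p : ℝ×ℝ => (p.1:ℂ) * Complex.exp ((p.2:ℂ)*I)) ⁻¹' Metric.ball 0 1 := by
      ext p
      rw [Set.mem_preimage, Set.mem_preimage, hsymmPolar p]
    have hE : MeasurableSet (Complex.polarCoord.symm ⁻¹' Metric.ball (0:ℂ) 1) := by
      rw [hEeq]; exact hcont.measurable measurableSet_ball
    have h1 : ∀ p : ℝ × ℝ,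
        p.1 • (Set.indicator (Metric.ball (0:ℂ) 1) Kf (Complex.polarCoord.symm p))
        = Set.indicator (Complex.polarCoord.symm ⁻¹' Metric.ball (0:ℂ) 1)
            (fun q : ℝ × ℝ => q.1 • Kf (Complex.polarCoord.symm q)) p := by
      intro p
      by_cases hp : Complex.polarCoord.symm p ∈ Metric.ball (0:ℂ) 1
      · rw [Set.indicator_of_mem hp, Set.indicator_of_mem (by exact hp)]
      · rw [Set.indicator_of_notMem hp, Set.indicator_of_notMem (by exact hp), smul_zero]
    simp_rw [h1]
    rw [setIntegral_indicator hE]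
    have hset : polarCoord.target ∩ Complex.polarCoord.symm ⁻¹' Metric.ball (0:ℂ) 1
        = s ×ˢ t := by
      rw [hEeq, polarCoord_target]
      ext ⟨r, θ⟩
      simp only [Set.mem_inter_iff, Set.mem_prod, Set.mem_Ioi, Set.mem_Ioo, Set.mem_preimage,
        Metric.mem_ball, dist_zero_right, normRexp, hs, ht]
      constructor
      · rintro ⟨⟨hr, hθ⟩, hlt⟩
        rw [abs_of_pos hr] at hlt
        exact ⟨⟨hr, hlt⟩, hθ⟩
      · rintro ⟨⟨hr0, hr1⟩, hθ⟩
        exact ⟨⟨hr0, hθ⟩, by rwa [abs_of_pos hr0]⟩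
    rw [hset]
  -- Step 4 : pointwise identification
  have hpoint : ∀ p ∈ s ×ˢ t, p.1 • Kf (Complex.polarCoord.symm p) = Fφ p := by
    rintro ⟨r, θ⟩ ⟨hr, hθ⟩
    simp only [hs, Set.mem_Ioo] at hr
    have hr0 : (0:ℝ) < r := hr.1
    have hw : Complex.polarCoord.symm (r, θ) = (r:ℂ) * Complex.exp ((θ:ℂ) * I) :=
      hsymmPolar _
    have hnw : ‖(r:ℂ) * Complex.exp ((θ:ℂ) * I)‖ = r := by
      rw [normRexp, abs_of_pos hr0]
    have hconj : (starRingEnd ℂ) ((r:ℂ) * Complex.exp ((θ:ℂ) * I))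
        = (r:ℂ) * Complex.exp (-(θ:ℂ) * I) := by
      rw [map_mul, Complex.conj_ofReal, ← Complex.exp_conj, map_mul, Complex.conj_ofReal,
        Complex.conj_I, mul_neg, neg_mul]
    have hqh : qhSymb k φ ((r:ℂ) * Complex.exp ((θ:ℂ) * I))
        = Complex.exp ((k:ℂ) * θ * I) * φ r := by
      rw [qhSymb, hnw]
      congr 1
      rw [mul_comm ((r:ℂ)) (Complex.exp ((θ:ℂ) * I)), mul_div_assoc,
        div_self (by exact_mod_cast ne_of_gt hr0 : (r:ℂ) ≠ 0), mul_one,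
        ← Complex.exp_int_mul, mul_assoc]
    have hwn : ((r:ℂ) * Complex.exp ((θ:ℂ) * I)) ^ n
        = (r:ℂ)^n * Complex.exp ((n:ℂ) * θ * I) := by
      rw [mul_pow, ← Complex.exp_nat_mul, mul_assoc]
    rw [hKf, hw]
    simp only
    rw [hconj, hqh, hwn, Complex.real_smul, hFφ, hG]
    simp only
    rw [show Complex.exp ((M:ℂ) * θ * I)
        = Complex.exp ((k:ℂ) * θ * I) * Complex.exp ((n:ℂ) * θ * I) from by
      rw [← Complex.exp_add]; congr 1; push_cast [hM]; ring]
    ring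
  -- measurability of G
  have hGmeas : Measurable G := by
    apply Measurable.mul
    · apply Measurable.sub
      · apply Measurable.add
        · exact ((Continuous.measurable (by fun_prop :
            Continuous (fun p : ℝ×ℝ => (1 - z * (p.1:ℂ) * Complex.exp (-(p.2:ℂ) * I)) ^ 2))).inv)
        · exact ((Continuous.measurable (by fun_prop :
            Continuous (fun p : ℝ×ℝ =>
              (1 - (starRingEnd ℂ) z * (p.1:ℂ) * Complex.exp ((p.2:ℂ) * I)) ^ 2))).inv)
      · exact measurable_const
    · exact Continuous.measurable (by fun_prop)
  have hFψmeas : Measurable Fψ := by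
    apply Measurable.mul
    · exact (hψm.measurable.comp measurable_fst).mul
        (Continuous.measurable (by fun_prop : Continuous (fun p : ℝ×ℝ => ((p.1:ℂ))^(n+1))))
    · exact hGmeas
  -- a.e. equality on the product
  have hprodrw : (volume : Measure (ℝ×ℝ)).restrict (s ×ˢ t)
      = (volume.restrict s).prod (volume.restrict t) := by
    rw [Measure.prod_restrict, ← Measure.volume_eq_prod]
  have haeprod : ∀ᵐ p : ℝ×ℝ ∂(volume : Measure (ℝ×ℝ)).restrict (s ×ˢ t), φ p.1 = ψ p.1 := by
    rw [hprodrw]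
    have h0 : (volume.restrict s) {r | ¬ φ r = ψ r} = 0 := hψφ
    obtain ⟨N, hNsub, hNm, hN0⟩ := exists_measurable_superset_of_null h0
    rw [ae_iff]
    have hsub : {p : ℝ×ℝ | ¬ φ p.1 = ψ p.1} ⊆ N ×ˢ (Set.univ : Set ℝ) := by
      intro p hp
      exact ⟨hNsub hp, trivial⟩
    refine le_antisymm (le_trans (measure_mono hsub) ?_) (zero_le)
    rw [Measure.prod_prod, hN0, zero_mul]
  have step5 : (∫ p in s ×ˢ t, Fφ p) = ∫ p in s ×ˢ t, Fψ p := by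
    apply integral_congr_ae
    filter_upwards [haeprod] with p hp
    rw [hFφ, hFψ]
    simp only [hp]
  -- integrability
  have hCpos : (0:ℝ) < 1 - ‖z‖ := by linarith
  set C : ℝ := 2 * ((1 - ‖z‖)⁻¹)^2 + 1 with hC
  have hGbound : ∀ p ∈ s ×ˢ t, ‖G p‖ ≤ C := by
    rintro ⟨r, θ⟩ ⟨hr, hθ⟩
    simp only [hs, Set.mem_Ioo] at hr
    have hkey : ∀ x : ℂ, ‖x‖ ≤ ‖z‖ → ‖((1 - x) ^ 2)⁻¹‖ ≤ ((1 - ‖z‖)⁻¹)^2 := by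
      intro x hx
      rw [norm_inv, norm_pow, ← inv_pow]
      apply pow_le_pow_left₀ (by positivity)
      rw [inv_le_inv₀ (by
        calc (0:ℝ) < 1 - ‖z‖ := hCpos
        _ ≤ ‖1 - x‖ := by
          calc 1 - ‖z‖ ≤ 1 - ‖x‖ := by linarith
          _ ≤ ‖1 - x‖ := by
            have := norm_sub_norm_le (1:ℂ) x
            simpa using this) hCpos]
      calc 1 - ‖z‖ ≤ 1 - ‖x‖ := by linarith
      _ ≤ ‖1 - x‖ := by simpa using norm_sub_norm_le (1:ℂ) x
    have hb1 : ‖z * (r:ℂ) * Complex.exp (-(θ:ℂ) * I)‖ ≤ ‖z‖ := by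
      rw [show (-(θ:ℂ) * I) = ((-θ:ℝ):ℂ) * I by push_cast; ring, norm_mul, norm_mul]
      rw [show ‖Complex.exp (((-θ:ℝ):ℂ)*I)‖ = 1 from by
        simpa using Complex.norm_exp_ofReal_mul_I (-θ)]
      rw [Complex.norm_real, Real.norm_eq_abs, abs_of_pos hr.1, mul_one]
      nlinarith [norm_nonneg z, hr.1, hr.2]
    have hb2 : ‖(starRingEnd ℂ) z * (r:ℂ) * Complex.exp ((θ:ℂ) * I)‖ ≤ ‖z‖ := by
      rw [norm_mul, norm_mul]
      rw [show ‖Complex.exp ((θ:ℂ)*I)‖ = 1 from by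
        simpa using Complex.norm_exp_ofReal_mul_I θ]
      rw [Complex.norm_real, Real.norm_eq_abs, abs_of_pos hr.1, mul_one]
      rw [show ‖(starRingEnd ℂ) z‖ = ‖z‖ from by simp]
      nlinarith [norm_nonneg z, hr.1, hr.2]
    rw [hG]
    simp only
    rw [norm_mul, show ‖Complex.exp ((M:ℂ) * θ * I)‖ = 1 from normExpIntMulI M θ, mul_one]
    calc ‖((1 - z * (r:ℂ) * Complex.exp (-(θ:ℂ) * I)) ^ 2)⁻¹
          + ((1 - (starRingEnd ℂ) z * (r:ℂ) * Complex.exp ((θ:ℂ) * I)) ^ 2)⁻¹ - 1‖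
        ≤ ‖((1 - z * (r:ℂ) * Complex.exp (-(θ:ℂ) * I)) ^ 2)⁻¹
          + ((1 - (starRingEnd ℂ) z * (r:ℂ) * Complex.exp ((θ:ℂ) * I)) ^ 2)⁻¹‖ + ‖(1:ℂ)‖ :=
          norm_sub_le _ _
      _ ≤ ‖((1 - z * (r:ℂ) * Complex.exp (-(θ:ℂ) * I)) ^ 2)⁻¹‖
          + ‖((1 - (starRingEnd ℂ) z * (r:ℂ) * Complex.exp ((θ:ℂ) * I)) ^ 2)⁻¹‖ + ‖(1:ℂ)‖ := by
          gcongr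
          exact norm_add_le _ _
      _ ≤ ((1 - ‖z‖)⁻¹)^2 + ((1 - ‖z‖)⁻¹)^2 + 1 := by
          have e1 := hkey _ hb1
          have e2 := hkey _ hb2
          simp only [norm_one]
          linarith
      _ = C := by rw [hC]; ring
  have hFψint : IntegrableOn Fψ (s ×ˢ t) := by
    rw [IntegrableOn, hprodrw]
    have htfin : IntegrableOn (fun _ : ℝ => C) t := by
      apply (integrableOn_const_iff (C := C)).mpr
      right
      rw [ht, Real.volume_Ioo]
      exact ENNReal.ofReal_lt_top
    have hb : Integrable (fun p : ℝ×ℝ => ‖ψ p.1 * (p.1:ℂ)‖ * C)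
        ((volume.restrict s).prod (volume.restrict t)) :=
      Integrable.mul_prod hψr.norm htfin
    apply Integrable.mono' hb (hFψmeas.aestronglyMeasurable)
    rw [← hprodrw]
    filter_upwards [ae_restrict_mem ((measurableSet_Ioo.prod measurableSet_Ioo) :
      MeasurableSet (s ×ˢ t))] with p hp
    obtain ⟨hp1, hp2⟩ := hp
    simp only [hs, Set.mem_Ioo] at hp1
    have hnb : ‖ψ p.1 * ((p.1:ℝ):ℂ)‖ = ‖ψ p.1‖ * p.1 := by
      rw [norm_mul, Complex.norm_real, Real.norm_eq_abs, abs_of_pos hp1.1]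
    rw [hnb, hFψ]
    simp only [norm_mul, norm_pow]
    rw [Complex.norm_real, Real.norm_eq_abs, abs_of_pos hp1.1]
    have h1 : p.1 ^ (n+1) = p.1 * p.1 ^ n := by ring
    rw [h1]
    have hGb := hGbound p ⟨by exact hp1, hp2⟩
    calc ‖ψ p.1‖ * (p.1 * p.1 ^ n) * ‖G p‖
        = (‖ψ p.1‖ * p.1) * (p.1 ^ n * ‖G p‖) := by ring
      _ ≤ (‖ψ p.1‖ * p.1) * (1 * C) := by
          apply mul_le_mul_of_nonneg_left
          · apply mul_le_mul
            · exact pow_le_one₀ (le_of_lt hp1.1) (le_of_lt hp1.2)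
            · exact hGb
            · exact norm_nonneg _
            · exact zero_le_one
          · exact mul_nonneg (norm_nonneg _) (le_of_lt hp1.1)
      _ = ‖ψ p.1‖ * p.1 * C := by ring
  -- Fubini
  have step6 : (∫ p in s ×ˢ t, Fψ p) = ∫ r in s, ∫ θ in t, Fψ (r, θ) := by
    rw [show (∫ p in s ×ˢ t, Fψ p)
        = ∫ p in s ×ˢ t, Fψ p ∂((volume : Measure ℝ).prod volume) from by
      rw [← Measure.volume_eq_prod]]
    apply setIntegral_prod
    rw [IntegrableOn, ← Measure.volume_eq_prod]
    exact hFψint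
  -- inner integral
  have step7 : ∀ r ∈ s, (∫ θ in t, Fψ (r, θ))
      = (ψ r * (r:ℂ)^(n+1)) *
        (if 0 ≤ M then 2 * (π:ℂ) * ((M:ℂ) + 1) * (z * (r:ℂ)) ^ M.toNat
         else 2 * (π:ℂ) * (1 - (M:ℂ)) * ((starRingEnd ℂ) z * (r:ℂ)) ^ (-M).toNat) := by
    intro r hr
    simp only [hs, Set.mem_Ioo] at hr
    have ha : ‖z * (r:ℂ)‖ < 1 := by
      rw [norm_mul, Complex.norm_real, Real.norm_eq_abs, abs_of_pos hr.1]
      nlinarith [norm_nonneg z]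
    have hb : ‖(starRingEnd ℂ) z * (r:ℂ)‖ < 1 := by
      rw [norm_mul, Complex.norm_real, Real.norm_eq_abs, abs_of_pos hr.1]
      rw [show ‖(starRingEnd ℂ) z‖ = ‖z‖ from by simp]
      nlinarith [norm_nonneg z]
    have hval := innerInt (z * (r:ℂ)) ((starRingEnd ℂ) z * (r:ℂ)) ha hb M
    rw [hFψ]
    simp only [hG]
    rw [integral_const_mul]
    congr 1
  rw [step3, setIntegral_congr_fun (measurableSet_Ioo.prod measurableSet_Ioo) hpoint,
    step5, step6, setIntegral_congr_fun measurableSet_Ioo step7]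

/-- For `k ∈ ℤ` and a radial `φ ∈ L¹(D,dA)`, the Toeplitz operator `T_{e^{ikθ}φ} = Q(u ·)`
on the harmonic Bergman space of the unit disk satisfies, for every natural `n` and `z` in
the disk: `T_{e^{ikθ}φ}(z^n) = 2(n+k+1) φ̂(2n+k+2) z^{n+k}` if `n ≥ −k`, and
`T_{e^{ikθ}φ}(z^n) = 2(−n−k+1) φ̂(−k+2) z̄^{−n−k}` if `n < −k`. -/
theorem stmt10 (k : ℤ) (φ : ℝ → ℂ)
    (hφ : IntegrableOn (fun r : ℝ => φ r * (r : ℂ)) (Set.Ioo 0 1))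
    (n : ℕ) (z : ℂ) (hz : z ∈ Metric.ball (0:ℂ) 1) :
    (-k ≤ (n : ℤ) →
      harmProj (fun w => qhSymb k φ w * w ^ n) z =
        2 * ((n : ℂ) + k + 1) * mellinT φ (2 * n + k + 2) * z ^ ((n : ℤ) + k)) ∧
    ((n : ℤ) < -k →
      harmProj (fun w => qhSymb k φ w * w ^ n) z =
        2 * (-(n : ℂ) - k + 1) * mellinT φ (-k + 2) * (starRingEnd ℂ z) ^ (-(n : ℤ) - k)) := by
  have hzn : ‖z‖ < 1 := by simpa using hz
  have hπ : (π : ℂ) ≠ 0 := by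
    exact_mod_cast Real.pi_ne_zero
  have hae := hφ.aestronglyMeasurable
  set ψ : ℝ → ℂ := fun r => hae.mk (fun r : ℝ => φ r * (r:ℂ)) r * ((r:ℂ))⁻¹ with hψdef
  have hψm : StronglyMeasurable ψ :=
    hae.stronglyMeasurable_mk.mul ((Complex.measurable_ofReal.inv).stronglyMeasurable)
  have hψφ : ∀ᵐ r ∂(volume.restrict (Set.Ioo (0:ℝ) 1)), φ r = ψ r := by
    filter_upwards [hae.ae_eq_mk, ae_restrict_mem measurableSet_Ioo] with r h1 h2
    have hr0 : (r:ℂ) ≠ 0 := by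
      exact_mod_cast ne_of_gt h2.1
    rw [hψdef]
    simp only
    rw [← h1]
    field_simp
  have hψr : Integrable (fun r => ψ r * (r:ℂ)) (volume.restrict (Set.Ioo (0:ℝ) 1)) := by
    apply hφ.congr
    filter_upwards [hψφ] with r h
    rw [h]
  have hkey := keyPolar k n z hzn φ ψ hψm hψφ hψr
  have hmell : ∀ N : ℕ, (∫ r in Set.Ioo (0:ℝ) 1, ψ r * (r:ℂ)^N)
      = ∫ r in Set.Ioo (0:ℝ) 1, φ r * (r:ℂ)^((N:ℂ)) := by
    intro N
    apply integral_congr_ae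
    filter_upwards [hψφ] with r h
    rw [h, Complex.cpow_natCast]
  constructor
  · -- case n + k ≥ 0
    intro hnk
    have hM0 : (0:ℤ) ≤ (n:ℤ) + k := by omega
    set N1 : ℕ := ((n:ℤ) + k).toNat with hN1
    have hN1' : ((N1:ℤ)) = (n:ℤ) + k := Int.toNat_of_nonneg hM0
    have hN1c : ((N1:ℕ):ℂ) = (n:ℂ) + k := by
      rw [← Int.cast_natCast (R := ℂ), hN1']
      push_cast
      ring
    rw [harmProj, hkey]
    have hif : ∀ r ∈ Set.Ioo (0:ℝ) 1,
        (ψ r * (r:ℂ)^(n+1)) *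
          (if 0 ≤ (n:ℤ) + k
           then 2 * (π:ℂ) * (((n:ℤ) + k : ℤ) + 1) * (z * (r:ℂ)) ^ ((n:ℤ) + k).toNat
           else 2 * (π:ℂ) * (1 - ((n:ℤ) + k : ℤ)) *
             ((starRingEnd ℂ) z * (r:ℂ)) ^ (-((n:ℤ) + k)).toNat)
        = (2 * (π:ℂ) * ((n:ℂ) + k + 1) * z ^ N1) * (ψ r * (r:ℂ)^(n+1+N1)) := by
      intro r hr
      rw [if_pos hM0, ← hN1]
      rw [mul_pow, pow_add]
      rw [show ((((n:ℤ) + k : ℤ):ℂ) + 1) = ((n:ℂ) + k + 1) from by push_cast; ring]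
      ring
    rw [setIntegral_congr_fun measurableSet_Ioo hif, integral_const_mul]
    have hT : mellinT φ (2 * n + k + 2) = ∫ r in Set.Ioo (0:ℝ) 1, ψ r * (r:ℂ)^(n+1+N1) := by
      rw [mellinT, hmell (n+1+N1)]
      apply setIntegral_congr_fun measurableSet_Ioo
      intro r hr
      congr 1
      rw [show (((n+1+N1 : ℕ)):ℂ) = 2 * (n:ℂ) + k + 2 - 1 from by push_cast [hN1c]; ring]
    rw [hT]
    rw [show z ^ ((n:ℤ) + k) = z ^ N1 from by rw [← hN1', zpow_natCast]]
    field_simp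
  · -- case n + k < 0
    intro hnk
    have hM0 : ¬ (0:ℤ) ≤ (n:ℤ) + k := by omega
    set N2 : ℕ := (-((n:ℤ) + k)).toNat with hN2
    have hN2' : ((N2:ℤ)) = -((n:ℤ) + k) := Int.toNat_of_nonneg (by omega)
    have hN2c : ((N2:ℕ):ℂ) = -(n:ℂ) - k := by
      rw [← Int.cast_natCast (R := ℂ), hN2']
      push_cast
      ring
    rw [harmProj, hkey]
    have hif : ∀ r ∈ Set.Ioo (0:ℝ) 1,
        (ψ r * (r:ℂ)^(n+1)) *
          (if 0 ≤ (n:ℤ) + k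
           then 2 * (π:ℂ) * (((n:ℤ) + k : ℤ) + 1) * (z * (r:ℂ)) ^ ((n:ℤ) + k).toNat
           else 2 * (π:ℂ) * (1 - ((n:ℤ) + k : ℤ)) *
             ((starRingEnd ℂ) z * (r:ℂ)) ^ (-((n:ℤ) + k)).toNat)
        = (2 * (π:ℂ) * (-(n:ℂ) - k + 1) * ((starRingEnd ℂ) z) ^ N2)
            * (ψ r * (r:ℂ)^(n+1+N2)) := by
      intro r hr
      rw [if_neg hM0, ← hN2]
      rw [mul_pow, pow_add]
      rw [show (1 - (((n:ℤ) + k : ℤ):ℂ)) = (-(n:ℂ) - k + 1) from by push_cast; ring]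
      ring
    rw [setIntegral_congr_fun measurableSet_Ioo hif, integral_const_mul]
    have hT : mellinT φ (-k + 2) = ∫ r in Set.Ioo (0:ℝ) 1, ψ r * (r:ℂ)^(n+1+N2) := by
      rw [mellinT, hmell (n+1+N2)]
      apply setIntegral_congr_fun measurableSet_Ioo
      intro r hr
      congr 1
      rw [show (((n+1+N2 : ℕ)):ℂ) = -(k:ℂ) + 2 - 1 from by push_cast [hN2c]; ring]
    rw [hT]
    rw [show (starRingEnd ℂ) z ^ (-(n:ℤ) - k) = (starRingEnd ℂ) z ^ N2 from by
      rw [show (-(n:ℤ) - k) = (N2:ℤ) from by omega, zpow_natCast]]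
    field_simp
end

section
/- Let k, l ∈ ℤ and let φ be a radial T-function. Write T_{e^{ikθ}φ}(r^{|l|}e^{ilθ}) = λ_{k,l}·r^{|k+l|}e^{i(k+l)θ} for the constant λ_{k,l}. Then (|−l|+1)·λ_{k,l} = (|l+k|+1)·λ_{k,−l−k}. -/
/-- Let `k, l ∈ ℤ` and let `φ` be a radial T-function with Mellin transform `φ̂`. Writing
`T_{e^{ikθ}φ}(r^{|l|}e^{ilθ}) = λ_{k,l} · r^{|k+l|}e^{i(k+l)θ}`, the constants `λ_{k,l}`
are given explicitly by: `λ_{k,l} = 2(l+k+1)φ̂(2l+k+2)` if `l ≥ 0, l ≥ −k`;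
`2(−l−k+1)φ̂(−k+2)` if `l ≥ 0, l ≤ −k`; `2(−l−k+1)φ̂(−2l−k+2)` if `l ≤ 0, −l ≥ k`;
`2(l+k+1)φ̂(k+2)` if `l ≤ 0, −l ≤ k`. Then `(|−l|+1) λ_{k,l} = (|l+k|+1) λ_{k,−l−k}`. -/
theorem stmt11 (k : ℤ) (φhat : ℤ → ℂ) (lam : ℤ → ℂ)
    (h1 : ∀ l : ℤ, 0 ≤ l → -k ≤ l →
      lam l = 2 * ((l : ℂ) + k + 1) * φhat (2 * l + k + 2))
    (h2 : ∀ l : ℤ, 0 ≤ l → l ≤ -k →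
      lam l = 2 * (-(l : ℂ) - k + 1) * φhat (-k + 2))
    (h3 : ∀ l : ℤ, l ≤ 0 → k ≤ -l →
      lam l = 2 * (-(l : ℂ) - k + 1) * φhat (-2 * l - k + 2))
    (h4 : ∀ l : ℤ, l ≤ 0 → -l ≤ k →
      lam l = 2 * ((l : ℂ) + k + 1) * φhat (k + 2)) :
    ∀ l : ℤ, ((|(-l)| : ℤ) + 1 : ℂ) * lam l = ((|l + k| : ℤ) + 1 : ℂ) * lam (-l - k) := by
  intro l
  rcases le_total 0 l with hl | hl
  · rcases le_total (-k) l with hk | hk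
    · rw [h1 l hl hk, h3 (-l - k) (by omega) (by omega),
        abs_of_nonpos (by omega : -l ≤ 0), abs_of_nonneg (by omega : (0:ℤ) ≤ l + k),
        show (-2 * (-l - k) - k + 2 : ℤ) = 2 * l + k + 2 by ring]
      push_cast; ring
    · rw [h2 l hl hk, h2 (-l - k) (by omega) (by omega),
        abs_of_nonpos (by omega : -l ≤ 0), abs_of_nonpos (by omega : l + k ≤ 0)]
      push_cast; ring
  · rcases le_total (-l) k with hk | hk
    · rw [h4 l hl hk, h4 (-l - k) (by omega) (by omega),
        abs_of_nonneg (by omega : (0:ℤ) ≤ -l), abs_of_nonneg (by omega : (0:ℤ) ≤ l + k)]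
      push_cast; ring
    · rw [h3 l hl hk, h1 (-l - k) (by omega) (by omega),
        abs_of_nonneg (by omega : (0:ℤ) ≤ -l), abs_of_nonpos (by omega : l + k ≤ 0),
        show (2 * (-l - k) + k + 2 : ℤ) = -2 * l - k + 2 by ring]
      push_cast; ring
end

section
/- Let φ and ψ be nonzero radial L¹ functions on [0,1] with r·φ, r·ψ ∈ L¹([0,1],dr), and suppose (z−k)(z+k)·φ̂(z)·ψ̂(z) = C for some nonzero constant C and integer k ≥ 1, for all z with Re z ≥ 2. Then k = 1, i.e., the Mellin transform of the convolution φ ∗_M ψ equals C/((z−1)(z+1)). -/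
open MeasureTheory Complex

/-- Let `φ, ψ` be nonzero radial functions with `r φ, r ψ ∈ L¹([0,1], dr)`, and suppose
`(z−k)(z+k) φ̂(z) ψ̂(z) = C` for some nonzero constant `C` and an integer `k ≥ 1`, for all
`z` with `Re z ≥ 2` (where `f̂(z) = ∫₀¹ f(r) r^{z−1} dr` is the Mellin transform). Then
`k = 1`, i.e. the Mellin transform of the convolution `φ ∗_M ψ`, which equals `φ̂ ψ̂`,
is `C/((z−1)(z+1))`. -/
theorem stmt18 (φ ψ : ℝ → ℂ) (k : ℤ) (hk : 1 ≤ k) (C : ℂ) (hC : C ≠ 0)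
    (hφ : IntegrableOn (fun r : ℝ => φ r * (r : ℂ)) (Set.Ioo 0 1))
    (hψ : IntegrableOn (fun r : ℝ => ψ r * (r : ℂ)) (Set.Ioo 0 1))
    (hφ0 : ∃ r ∈ Set.Ioo (0:ℝ) 1, φ r ≠ 0)
    (hψ0 : ∃ r ∈ Set.Ioo (0:ℝ) 1, ψ r ≠ 0)
    (heq : ∀ z : ℂ, 2 ≤ z.re →
      (z - k) * (z + k) * (∫ r in Set.Ioo (0:ℝ) 1, φ r * (r : ℂ) ^ (z - 1)) *
        (∫ r in Set.Ioo (0:ℝ) 1, ψ r * (r : ℂ) ^ (z - 1)) = C) :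
    k = 1 ∧ ∀ z : ℂ, 2 ≤ z.re →
      (∫ r in Set.Ioo (0:ℝ) 1, φ r * (r : ℂ) ^ (z - 1)) *
        (∫ r in Set.Ioo (0:ℝ) 1, ψ r * (r : ℂ) ^ (z - 1)) = C / ((z - 1) * (z + 1)) := by
  have hk1 : k = 1 := by
    by_contra h
    have hk2 : 2 ≤ k := by omega
    have h2 : (2:ℝ) ≤ ((k:ℂ)).re := by
      simp only [Complex.intCast_re]
      exact_mod_cast hk2
    have := heq (k:ℂ) h2
    simp at this
    exact hC this.symm
  subst hk1
  refine ⟨rfl, fun z hz => ?_⟩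
  have h1 : z - 1 ≠ 0 := by
    intro h
    have : z = 1 := by linear_combination h
    rw [this] at hz; norm_num at hz
  have h2 : z + 1 ≠ 0 := by
    intro h
    have : z = -1 := by linear_combination h
    rw [this] at hz; norm_num at hz
  have := heq z hz
  push_cast at this
  field_simp
  linear_combination this
end
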